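/- Let S be a Serre subcategory closed under taking injective hulls and let 0 → E^0 → E^1 → ⋯ be a minimal injective resolution of M. Then H^i_{I,J}(M) ∈ S for all i < t if and only if Γ_{I,J}(E^i) ∈ S for all i < t. -/

import Mathlib

open CategoryTheory

noncomputable section

variable {R : Type} [CommRing R]

/-- `W(I,J)`: primes `p` with `I^t ⊆ J + p` for some `t > 0`. -/
def PairW (I J : Ideal R) : Set (PrimeSpectrum R) :=
  {p | ∃ t : ℕ, 0 < t ∧ I ^ t ≤ J + p.asIdeal}

/-- `W̃(I,J)`: ideals `a` with `I^t ⊆ J + a` for some `t > 0`. -/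
def PairWTilde (I J : Ideal R) : Set (Ideal R) :=
  {a | ∃ t : ℕ, 0 < t ∧ I ^ t ≤ J + a}

lemma PairWTilde.mul_mem {I J a b : Ideal R}
    (ha : a ∈ PairWTilde I J) (hb : b ∈ PairWTilde I J) : a * b ∈ PairWTilde I J := by
  obtain ⟨t1, ht1, hta⟩ := ha
  obtain ⟨t2, ht2, htb⟩ := hb
  refine ⟨t1 + t2, by omega, ?_⟩
  have h1 : (J + a) * (J + b) = J * J + J * b + a * J + a * b := by ring
  calc I ^ (t1 + t2) = I ^ t1 * I ^ t2 := pow_add I t1 t2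
    _ ≤ (J + a) * (J + b) := Ideal.mul_mono hta htb
    _ ≤ J + a * b := by
        rw [h1]
        simp only [Ideal.add_eq_sup]
        exact sup_le (sup_le (sup_le (le_sup_of_le_left Ideal.mul_le_right)
          (le_sup_of_le_left Ideal.mul_le_left)) (le_sup_of_le_left Ideal.mul_le_right))
          le_sup_right

/-- The `(I,J)`-torsion submodule `Γ_{I,J}(M)` (characterized via annihilators). -/
def pairTorsion (I J : Ideal R) (M : Type) [AddCommGroup M] [Module R M] :
    Submodule R M where
  carrier := {x | ∃ a ∈ PairWTilde I J, ∀ r ∈ a, r • x = 0}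
  zero_mem' := ⟨I, ⟨1, one_pos, by rw [pow_one, Ideal.add_eq_sup]; exact le_sup_right⟩,
    fun r _ => smul_zero r⟩
  add_mem' := by
    rintro x y ⟨a, ha, hax⟩ ⟨b, hb, hby⟩
    refine ⟨a * b, PairWTilde.mul_mem ha hb, fun r hr => ?_⟩
    rw [smul_add, hax r (Ideal.mul_le_left hr), hby r (Ideal.mul_le_right hr), add_zero]
  smul_mem' := by
    rintro c x ⟨a, ha, hax⟩
    exact ⟨a, ha, fun r hr => by rw [smul_comm, hax r hr, smul_zero]⟩

/-- The `(I,J)`-torsion functor `Γ_{I,J}`. -/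
def pairTorsionFunctor (I J : Ideal R) : ModuleCat.{0} R ⥤ ModuleCat.{0} R where
  obj M := ModuleCat.of R (pairTorsion I J M)
  map {M N} f := ModuleCat.ofHom <| f.hom.restrict (p := pairTorsion I J M) (q := pairTorsion I J N)
    (fun x hx => by
      obtain ⟨a, ha, h⟩ := hx
      exact ⟨a, ha, fun r hr => by rw [← map_smul, h r hr, map_zero]⟩)
  map_id M := rfl
  map_comp f g := rfl

instance (I J : Ideal R) : (pairTorsionFunctor I J).Additive where
  map_add := rfl

/-- Local cohomology `H^i_{I,J}` with respect to the pair `(I,J)`, as the `i`-th right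
derived functor of `Γ_{I,J}`. -/
def pairLocalCohomology (I J : Ideal R) (i : ℕ) : ModuleCat.{0} R ⥤ ModuleCat.{0} R :=
  (pairTorsionFunctor I J).rightDerived i

/-- Ordinary local cohomology `H^i_a = H^i_{a,0}`. -/
def idealLocalCohomology (a : Ideal R) (i : ℕ) : ModuleCat.{0} R ⥤ ModuleCat.{0} R :=
  pairLocalCohomology a 0 i

/-- `Ext_R^i(N, M)` as an `R`-module. -/
def extGroup (i : ℕ) (N M : ModuleCat.{0} R) : ModuleCat.{0} R :=
  ((Ext R (ModuleCat.{0} R) i).obj (Opposite.op N)).obj M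

/-- A Serre subcategory of the category of `R`-modules, given by a predicate closed
under submodules, quotients and extensions. -/
structure SerreClass (R : Type) [CommRing R] where
  mem : ModuleCat.{0} R → Prop
  mem_of_injective : ∀ {M N : ModuleCat.{0} R} (f : M →ₗ[R] N),
    Function.Injective f → mem N → mem M
  mem_of_surjective : ∀ {M N : ModuleCat.{0} R} (f : M →ₗ[R] N),
    Function.Surjective f → mem M → mem N
  mem_of_exact : ∀ {M N K : ModuleCat.{0} R} (f : M →ₗ[R] N) (g : N →ₗ[R] K),
    Function.Injective f → Function.Surjective g → Function.Exact f g →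
    mem M → mem K → mem N

/-- `M` is `I`-torsion. -/
def IsTorsionWrt (I : Ideal R) (M : Type) [AddCommGroup M] [Module R M] : Prop :=
  ∀ x : M, ∃ n : ℕ, ∀ r ∈ I ^ n, r • x = 0

/-- A Melkersson subcategory with respect to `I`. -/
structure MelkerssonClass (R : Type) [CommRing R] (I : Ideal R) extends SerreClass R where
  mem_of_torsionBy : ∀ (M : ModuleCat.{0} R), IsTorsionWrt I M →
    mem (ModuleCat.of R (Submodule.torsionBySet R M (I : Set R))) → mem M

/-- `M` is an `(I,J)`-torsion module. -/
def IsPairTorsion (I J : Ideal R) (M : Type) [AddCommGroup M] [Module R M] : Prop :=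
  pairTorsion I J M = ⊤

/-- dim_R N ≤ k, via the Krull dimension of the support. -/
def moduleDimLE (R : Type) [CommRing R] (N : Type) [AddCommGroup N] [Module R N]
    (k : ℤ) : Prop :=
  Order.krullDim (Module.support R N) ≤ if k < 0 then ⊥ else ((k.toNat : ℕ∞) : WithBot ℕ∞)

/-!
Over a Noetherian ring `Γ_{I,J}` preserves injective modules: a map `a → Γ_{I,J}(E)` from an
ideal has finitely generated image, hence is killed by some `b ∈ W̃(I,J)`; by Artin–Rees it
vanishes on `a ∩ bⁿ`, so it factors through `a/(a ∩ bⁿ) ⊆ R/bⁿ` and extends to `R/bⁿ` by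
injectivity of `E`, landing in `Γ_{I,J}(E)` because `bⁿ ∈ W̃(I,J)`. Thus `Γ_{I,J}(E^•)` is a
complex of injectives computing `H^*_{I,J}(M)`, and minimality of `E^•` makes each
`Γ_{I,J}(E^i)` an essential extension of its cycles `Z^i`. Inductively, `Z^i` is an extension
of `H^i_{I,J}(M)` by a quotient of `Γ_{I,J}(E^{i-1})`, so it lies in `S`, and then so does its
injective hull `Γ_{I,J}(E^i)`. Conversely `H^i_{I,J}(M)` is a subquotient of `Γ_{I,J}(E^i)`.
-/

universe u

theorem Ideal.exists_pow_succ_inf_le_mul {R : Type u} [CommRing R] [IsNoetherianRing R]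
    (b a : Ideal R) : ∃ k : ℕ, b ^ (k + 1) ⊓ a ≤ b * a := by
  obtain ⟨k, hk⟩ := Ideal.exists_pow_inf_eq_pow_smul b (a : Submodule R R)
  refine ⟨k, ?_⟩
  have := hk (k + 1) k.le_succ
  simp only [smul_eq_mul, Ideal.mul_top, Nat.add_sub_cancel_left, pow_one] at this
  rw [this]
  exact Ideal.mul_mono_right inf_le_right

theorem Module.Injective.exists_smul_eq_of_comap_le_ker {R E : Type u} [Ring R]
    [AddCommGroup E] [Module R E] [Module.Injective R E] {a c : Ideal R} (f : a →ₗ[R] E)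
    (hf : Submodule.comap a.subtype c ≤ LinearMap.ker f) :
    ∃ x : E, (∀ r ∈ c, r • x = 0) ∧ ∀ (r : R) (hr : r ∈ a), r • x = f ⟨r, hr⟩ := by
  let ι : (a ⧸ Submodule.comap a.subtype c) →ₗ[R] R ⧸ c := Submodule.mapQ _ c a.subtype le_rfl
  have hι : Function.Injective ι := by
    rw [← LinearMap.ker_eq_bot, Submodule.ker_mapQ, Submodule.mkQ_map_self]
  obtain ⟨h, hh⟩ := Module.Injective.out ι hι ((Submodule.comap a.subtype c).liftQ f hf)
  have h_smul : ∀ r : R, r • h (Submodule.Quotient.mk 1) = h (Submodule.Quotient.mk r) := by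
    intro r
    rw [← map_smul, ← Submodule.Quotient.mk_smul, smul_eq_mul, mul_one]
  refine ⟨h (Submodule.Quotient.mk 1), fun r hr => ?_, fun r hr => ?_⟩
  · rw [h_smul, (Submodule.Quotient.mk_eq_zero c).2 hr, map_zero]
  · rw [h_smul]
    exact hh (Submodule.Quotient.mk ⟨r, hr⟩)

def Submodule.IsEssential {R M : Type*} [Semiring R] [AddCommMonoid M] [Module R M]
    (N : Submodule R M) : Prop :=
  ∀ P : Submodule R M, P ⊓ N = ⊥ → P = ⊥

lemma Submodule.IsEssential.comap_subtype {R M : Type*} [Semiring R] [AddCommMonoid M]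
    [Module R M] {N : Submodule R M} (hN : N.IsEssential) (Q : Submodule R M) :
    (N.comap Q.subtype).IsEssential := by
  intro P hP
  have : P.map Q.subtype ⊓ N = ⊥ := by
    rw [eq_bot_iff]
    rintro _ ⟨⟨p, hpP, rfl⟩, hpN⟩
    simpa using hP.le ⟨hpP, hpN⟩
  rw [eq_bot_iff]
  intro p hp
  simpa using (hN _ this).le ⟨p, hp, rfl⟩

lemma PairWTilde.pow_mem {I J b : Ideal R} (hb : b ∈ PairWTilde I J) {n : ℕ} (hn : n ≠ 0) :
    b ^ n ∈ PairWTilde I J := by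
  induction n, Nat.one_le_iff_ne_zero.2 hn using Nat.le_induction with
  | base => rwa [pow_one]
  | succ m _ ih => rw [pow_succ]; exact PairWTilde.mul_mem (ih (by omega)) hb

lemma exists_mem_pairWTilde_le_annihilator {I J : Ideal R} {E : Type} [AddCommGroup E]
    [Module R E] {N : Submodule R E} (hfg : N.FG) (hN : N ≤ pairTorsion I J E) :
    ∃ b ∈ PairWTilde I J, b ≤ N.annihilator := by
  induction N, hfg using Submodule.fg_induction with
  | singleton x =>
    obtain ⟨b, hbW, hb⟩ := hN (Submodule.mem_span_singleton_self x)
    exact ⟨b, hbW, fun r hr => (Submodule.mem_annihilator_span_singleton x r).2 (hb r hr)⟩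
  | sup N₁ N₂ _ _ ih₁ ih₂ =>
    obtain ⟨b₁, hb₁W, hb₁⟩ := ih₁ (le_sup_left.trans hN)
    obtain ⟨b₂, hb₂W, hb₂⟩ := ih₂ (le_sup_right.trans hN)
    refine ⟨b₁ * b₂, PairWTilde.mul_mem hb₁W hb₂W, ?_⟩
    rw [Submodule.annihilator_sup]
    exact Ideal.mul_le_inf.trans (inf_le_inf hb₁ hb₂)

theorem baer_pairTorsion [IsNoetherianRing R] (I J : Ideal R) (E : Type) [AddCommGroup E]
    [Module R E] [Module.Injective R E] : Module.Baer R (pairTorsion I J E) := by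
  intro a g
  set f : a →ₗ[R] E := (pairTorsion I J E).subtype ∘ₗ g
  obtain ⟨b, hbW, hb⟩ := exists_mem_pairWTilde_le_annihilator (I := I) (J := J)
    (LinearMap.range_eq_map f ▸ (IsNoetherian.noetherian ⊤).map f)
    (by rintro _ ⟨x, rfl⟩; exact (g x).2)
  have hf_ba : Submodule.comap a.subtype (b * a) ≤ LinearMap.ker f := by
    have : b * a = (b • ⊤ : Submodule R a).map a.subtype := by
      rw [Submodule.map_smul'', Submodule.map_top, Submodule.range_subtype, smul_eq_mul]
    rw [this, Submodule.comap_map_eq_of_injective a.injective_subtype, Submodule.smul_le]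
    intro r hr z _
    rw [LinearMap.mem_ker, map_smul]
    exact (Submodule.mem_annihilator.1 (hb hr)) _ ⟨z, rfl⟩
  obtain ⟨k, hk⟩ := Ideal.exists_pow_succ_inf_le_mul b a
  obtain ⟨x, hxc, hxa⟩ := Module.Injective.exists_smul_eq_of_comap_le_ker (c := b ^ (k + 1)) f
    (le_trans (fun z hz => hk ⟨hz, z.2⟩) hf_ba)
  have hx : x ∈ pairTorsion I J E := ⟨b ^ (k + 1), PairWTilde.pow_mem hbW k.succ_ne_zero, hxc⟩
  exact ⟨LinearMap.toSpanSingleton R _ ⟨x, hx⟩, fun r hr => Subtype.ext (hxa r hr)⟩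

instance [IsNoetherianRing R] (I J : Ideal R) (E : ModuleCat.{0} R) [Injective E] :
    Injective ((pairTorsionFunctor I J).obj E) :=
  have := Module.injective_module_of_injective_object R E
  have := (baer_pairTorsion I J E).injective
  Module.injective_object_of_injective_module R (pairTorsion I J E)

lemma isEssential_ker_pairTorsionFunctor_map (I J : Ideal R) {X Y : ModuleCat.{0} R} (d : X ⟶ Y)
    (h : (LinearMap.ker d.hom).IsEssential) :
    (LinearMap.ker ((pairTorsionFunctor I J).map d).hom).IsEssential := by
  have hd : ∀ x ∈ pairTorsion I J X, d x ∈ pairTorsion I J Y :=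
    fun x hx => ((pairTorsionFunctor I J).map d ⟨x, hx⟩).2
  change (LinearMap.ker (d.hom.restrict hd)).IsEssential
  rw [LinearMap.ker_restrict]
  exact h.comap_subtype _

def SerreClass.IsClosedUnderInjectiveHulls (S : SerreClass R) : Prop :=
  ∀ {A B : ModuleCat.{0} R} (f : A →ₗ[R] B), Injective B → Function.Injective f →
    (LinearMap.range f).IsEssential → S.mem A → S.mem B

def CochainComplex.homologyIsoModuleCatLeftHomologyH (K : CochainComplex (ModuleCat.{0} R) ℕ)
    (i : ℕ) : K.homology i ≅ (K.sc' (i - 1) i (i + 1)).moduleCatLeftHomologyData.H :=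
  have hprev : (ComplexShape.up ℕ).prev i = i - 1 := by
    cases i
    · exact CochainComplex.prev_nat_zero
    · exact CochainComplex.prev_nat_succ _
  ShortComplex.homologyMapIso (K.isoSc' (i - 1) i (i + 1) hprev (by simp)) ≪≫
    (K.sc' (i - 1) i (i + 1)).moduleCatHomologyIso

namespace SerreClass

variable (S : SerreClass R)

lemma mem_of_iso {A B : ModuleCat.{0} R} (e : A ≅ B) (h : S.mem A) : S.mem B :=
  S.mem_of_surjective e.hom.hom (fun b => ⟨e.inv b, by simp⟩) h

section ShortComplex

variable {C : ShortComplex (ModuleCat.{0} R)}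

lemma mem_moduleCatLeftHomologyData_H (h : S.mem C.X₂) : S.mem C.moduleCatLeftHomologyData.H :=
  S.mem_of_surjective (M := ModuleCat.of R (LinearMap.ker C.g.hom)) (Submodule.mkQ _)
    (Submodule.mkQ_surjective _) (S.mem_of_injective (LinearMap.ker C.g.hom).subtype
      (LinearMap.ker C.g.hom).injective_subtype h)

lemma mem_ker_of_mem_X₁ (h₁ : S.mem C.X₁) (hH : S.mem C.moduleCatLeftHomologyData.H) :
    S.mem (ModuleCat.of R (LinearMap.ker C.g.hom)) := by
  set B := LinearMap.range C.moduleCatToCycles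
  have hB : S.mem (ModuleCat.of R B) :=
    S.mem_of_surjective (N := ModuleCat.of R B) C.moduleCatToCycles.rangeRestrict
      (LinearMap.surjective_rangeRestrict _) h₁
  exact S.mem_of_exact (M := ModuleCat.of R B) B.subtype B.mkQ B.injective_subtype
    B.mkQ_surjective (LinearMap.exact_subtype_mkQ B) hB hH

lemma mem_ker_of_f_eq_zero (hf : C.f = 0) (hH : S.mem C.moduleCatLeftHomologyData.H) :
    S.mem (ModuleCat.of R (LinearMap.ker C.g.hom)) := by
  refine S.mem_of_injective (M := ModuleCat.of R (LinearMap.ker C.g.hom))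
    (LinearMap.range C.moduleCatToCycles).mkQ ?_ hH
  change Function.Injective (LinearMap.range C.moduleCatToCycles).mkQ
  rw [← LinearMap.ker_eq_bot, Submodule.ker_mkQ, LinearMap.range_eq_bot]
  ext x
  change C.f x = 0
  rw [hf]
  rfl

end ShortComplex

variable (K : CochainComplex (ModuleCat.{0} R) ℕ)

lemma mem_homology_of_mem_X {i : ℕ} (h : S.mem (K.X i)) : S.mem (K.homology i) :=
  S.mem_of_iso (K.homologyIsoModuleCatLeftHomologyH i).symm (S.mem_moduleCatLeftHomologyData_H h)

lemma mem_ker_d_of_mem_homology {i : ℕ} (hX : ∀ j < i, S.mem (K.X j))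
    (hH : S.mem (K.homology i)) : S.mem (ModuleCat.of R (LinearMap.ker (K.d i (i + 1)).hom)) := by
  have hH' := S.mem_of_iso (K.homologyIsoModuleCatLeftHomologyH i) hH
  rcases i with _ | i
  · exact S.mem_ker_of_f_eq_zero (K.shape 0 0 (by simp)) hH'
  · exact S.mem_ker_of_mem_X₁ (hX i i.lt_succ_self) hH'

lemma mem_X_of_forall_mem_homology (hS : S.IsClosedUnderInjectiveHulls) [∀ i, Injective (K.X i)]
    (hK : ∀ i, (LinearMap.ker (K.d i (i + 1)).hom).IsEssential) (n : ℕ)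
    (hH : ∀ i ≤ n, S.mem (K.homology i)) : S.mem (K.X n) := by
  induction n using Nat.strong_induction_on with
  | _ n ih =>
    have hZ := S.mem_ker_d_of_mem_homology K
      (fun j hj => ih j hj fun i hi => hH i (by omega)) (hH n le_rfl)
    refine hS (LinearMap.ker (K.d n (n + 1)).hom).subtype inferInstance
      (Submodule.injective_subtype _) ?_ hZ
    rw [Submodule.range_subtype]
    exact hK n

end SerreClass

/-- for a Serre class closed under injective hulls and a minimal injective
resolution `E^•` of `M`: `H^i_{I,J}(M) ∈ S` for all `i < t` iff `Γ_{I,J}(E^i) ∈ S` for all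
`i < t`. -/
theorem stmt_15 (R : Type) [CommRing R] [IsNoetherianRing R] (I J : Ideal R)
    (M : ModuleCat.{0} R) (S : SerreClass R)
    (Shull : ∀ {A B : ModuleCat.{0} R} (f : A →ₗ[R] B), Injective B →
      Function.Injective f →
      (∀ P : Submodule R B, P ⊓ LinearMap.range f = ⊥ → P = ⊥) →
      S.mem A → S.mem B)
    (E : InjectiveResolution M)
    (hmin : ∀ i : ℕ, ∀ P : Submodule R (E.cocomplex.X i),
      P ⊓ LinearMap.ker (E.cocomplex.d i (i + 1)).hom = ⊥ → P = ⊥)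
    (t : ℤ) :
    (∀ i : ℕ, (i : ℤ) < t → S.mem ((pairLocalCohomology I J i).obj M)) ↔
    (∀ i : ℕ, (i : ℤ) < t →
      S.mem (ModuleCat.of R (pairTorsion I J (E.cocomplex.X i)))) := by
  set K := ((pairTorsionFunctor I J).mapHomologicalComplex (ComplexShape.up ℕ)).obj E.cocomplex
  have hH (i : ℕ) : (pairLocalCohomology I J i).obj M ≅ K.homology i :=
    E.isoRightDerivedObj (pairTorsionFunctor I J) i
  have (i : ℕ) : Injective (K.X i) :=
    have := E.injective i
    inferInstanceAs (Injective ((pairTorsionFunctor I J).obj _))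
  constructor
  · intro h i hi
    exact S.mem_X_of_forall_mem_homology K Shull
      (fun j => isEssential_ker_pairTorsionFunctor_map I J _ (hmin j)) i
      (fun j hj => S.mem_of_iso (hH j) (h j (by omega)))
  · exact fun h i hi => S.mem_of_iso (hH i).symm (S.mem_homology_of_mem_X K (h i hi))
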